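/- arXiv:1701.02473 — 2 statements merged into one kernel-verified Lean document; each statement's English description precedes it below -/
import Mathlib

section
/- The gradient of t ↦ ln(Σ_{p∈P} exp(−⟨θ_p, t⟩)) is Lipschitz continuous with respect to the Euclidean norm, with Lipschitz constant at most max_{p∈P} ‖θ_p‖₂². -/
/-!
The gradient is `-m(t)`, minus the mean of the `θ p` under the softmax weights `w(t)`. Since the
weights sum to one, the derivative of `-m` is the covariance operator
`∑ p, w p • (m - θ p) ⊗ (m - θ p)`, whose norm is at most its trace
`∑ p, w p * ‖m - θ p‖ ^ 2 = ∑ p, w p * ‖θ p‖ ^ 2 - ‖m‖ ^ 2 ≤ max_p ‖θ p‖ ^ 2`.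
The mean value inequality then gives the Lipschitz bound.
-/

open Finset Real InnerProductSpace

section

variable {ι E : Type*} [Fintype ι] [NormedAddCommGroup E] [InnerProductSpace ℝ E]

theorem sum_mul_norm_sum_smul_sub_sq {w : ι → ℝ} (hw : ∑ i, w i = 1) (x : ι → E) :
    ∑ i, w i * ‖∑ j, w j • x j - x i‖ ^ 2 = ∑ i, w i * ‖x i‖ ^ 2 - ‖∑ j, w j • x j‖ ^ 2 := by
  set m := ∑ j, w j • x j
  have hmean : ∑ i, w i * ⟪m, x i⟫_ℝ = ‖m‖ ^ 2 := by
    simp only [← real_inner_smul_right, ← inner_sum, m, real_inner_self_eq_norm_sq]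
  simp only [norm_sub_sq_real, mul_add, mul_sub, sum_add_distrib, sum_sub_distrib, ← sum_mul,
    hw, mul_left_comm _ (2 : ℝ), ← mul_sum, hmean]
  ring

theorem norm_sum_smul_rankOne_self_le {w : ι → ℝ} (hw : ∀ i, 0 ≤ w i) (y : ι → E) :
    ‖∑ i, w i • rankOne ℝ (y i) (y i)‖ ≤ ∑ i, w i * ‖y i‖ ^ 2 :=
  (norm_sum_le _ _).trans_eq <| sum_congr rfl fun i _ => by
    rw [norm_smul, norm_rankOne, Real.norm_of_nonneg (hw i), sq]

namespace LogSumExp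

variable (θ : ι → E)

noncomputable def logSumExp (t : E) : ℝ := log (∑ p, exp (-⟪θ p, t⟫_ℝ))

noncomputable def softmax (t : E) (p : ι) : ℝ := exp (-⟪θ p, t⟫_ℝ - logSumExp θ t)

noncomputable def softmaxMean (t : E) : E := ∑ p, softmax θ t p • θ p

theorem softmax_nonneg (t : E) (p : ι) : 0 ≤ softmax θ t p := (exp_pos _).le

variable [Nonempty ι]

theorem sum_exp_neg_inner_pos (t : E) : 0 < ∑ p, exp (-⟪θ p, t⟫_ℝ) :=
  sum_pos (fun _ _ => exp_pos _) univ_nonempty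

theorem sum_softmax (t : E) : ∑ p, softmax θ t p = 1 := by
  have hZ := sum_exp_neg_inner_pos θ t
  simp only [softmax, logSumExp, exp_sub, exp_log hZ, ← sum_div, div_self hZ.ne']

theorem hasFDerivAt_logSumExp (t : E) :
    HasFDerivAt (logSumExp θ) (innerSL ℝ (-softmaxMean θ t)) t := by
  have hZ := sum_exp_neg_inner_pos θ t
  have hsum : HasFDerivAt (fun s => ∑ p, exp (-⟪θ p, s⟫_ℝ))
      (∑ p, exp (-⟪θ p, t⟫_ℝ) • -innerSL ℝ (θ p)) t :=
    HasFDerivAt.fun_sum fun p _ => ((innerSL ℝ (θ p)).hasFDerivAt.neg).exp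
  refine (hsum.log hZ.ne').congr_fderiv ?_
  ext v
  simp [softmaxMean, softmax, logSumExp, exp_sub, exp_log hZ, mul_sum, div_eq_inv_mul, mul_assoc]

theorem hasGradientAt_logSumExp [CompleteSpace E] (t : E) :
    HasGradientAt (logSumExp θ) (-softmaxMean θ t) t :=
  hasGradientAt_iff_hasFDerivAt.mpr (hasFDerivAt_logSumExp θ t)

theorem hasFDerivAt_softmax (t : E) (p : ι) :
    HasFDerivAt (softmax θ · p) (softmax θ t p • innerSL ℝ (softmaxMean θ t - θ p)) t := by
  have h : HasFDerivAt (fun s => exp (-⟪θ p, s⟫_ℝ - logSumExp θ s))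
      (softmax θ t p • (-innerSL ℝ (θ p) - innerSL ℝ (-softmaxMean θ t))) t :=
    ((innerSL ℝ (θ p)).hasFDerivAt.neg.sub (hasFDerivAt_logSumExp θ t)).exp
  refine h.congr_fderiv ?_
  rw [map_neg, sub_neg_eq_add, neg_add_eq_sub, map_sub]

theorem hasFDerivAt_neg_softmaxMean (t : E) :
    HasFDerivAt (fun s => -softmaxMean θ s)
      (∑ p, softmax θ t p • rankOne ℝ (softmaxMean θ t - θ p) (softmaxMean θ t - θ p)) t := by
  -- As the weights sum to one, the constant `c` may be subtracted from every `θ p`;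
  -- taking `c` to be the mean at `t` centres the derivative there.
  set c := softmaxMean θ t
  have hc : (fun s => -softmaxMean θ s) = fun s => ∑ p, softmax θ s p • (c - θ p) - c := by
    ext s
    simp only [smul_sub, sum_sub_distrib, ← sum_smul, sum_softmax, one_smul, softmaxMean]
    abel
  rw [hc]
  refine ((HasFDerivAt.fun_sum fun p _ =>
    (hasFDerivAt_softmax θ t p).smul_const (c - θ p)).sub_const c).congr_fderiv ?_
  refine sum_congr rfl fun p _ => ?_
  ext v
  simp only [smul_apply, ContinuousLinearMap.smulRight_apply, rankOne_apply, innerSL_apply_apply,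
    smul_eq_mul, smul_smul]
  rfl

theorem lipschitzWith_neg_softmaxMean {L : ℝ} (hL : ∀ p, ‖θ p‖ ^ 2 ≤ L) :
    LipschitzWith L.toNNReal (fun t => -softmaxMean θ t) := by
  refine lipschitzWith_of_nnnorm_fderiv_le (𝕜 := ℝ)
    (fun t => (hasFDerivAt_neg_softmaxMean θ t).differentiableAt) fun t => ?_
  rw [(hasFDerivAt_neg_softmaxMean θ t).fderiv, ← NNReal.coe_le_coe, coe_nnnorm]
  refine le_trans ?_ (Real.le_coe_toNNReal L)
  calc ‖∑ p, softmax θ t p • rankOne ℝ (softmaxMean θ t - θ p) (softmaxMean θ t - θ p)‖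
      ≤ ∑ p, softmax θ t p * ‖softmaxMean θ t - θ p‖ ^ 2 :=
        norm_sum_smul_rankOne_self_le (softmax_nonneg θ t) _
    _ = ∑ p, softmax θ t p * ‖θ p‖ ^ 2 - ‖softmaxMean θ t‖ ^ 2 :=
        sum_mul_norm_sum_smul_sub_sq (sum_softmax θ t) θ
    _ ≤ ∑ p, softmax θ t p * L :=
        (sub_le_self _ (sq_nonneg _)).trans <|
          sum_le_sum fun p _ => mul_le_mul_of_nonneg_left (hL p) (softmax_nonneg θ t p)
    _ = L := by rw [← sum_mul, sum_softmax, one_mul]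

end LogSumExp

end

theorem logsumexp_gradient_lipschitz {P : Type*} [Fintype P] [Nonempty P] (n : ℕ)
    (θ : P → EuclideanSpace ℝ (Fin n)) :
    LipschitzWith
      (Real.toNNReal (Finset.univ.sup' Finset.univ_nonempty (fun p => ‖θ p‖ ^ 2)))
      (gradient (fun t : EuclideanSpace ℝ (Fin n) =>
        Real.log (∑ p, Real.exp (-(inner ℝ (θ p) t : ℝ))))) := by
  have hgrad : gradient (fun t : EuclideanSpace ℝ (Fin n) =>
      Real.log (∑ p, Real.exp (-(inner ℝ (θ p) t : ℝ)))) = fun t => -LogSumExp.softmaxMean θ t :=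
    funext fun t => (LogSumExp.hasGradientAt_logSumExp θ t).gradient
  rw [hgrad]
  exact LogSumExp.lipschitzWith_neg_softmaxMean θ fun p => le_sup' (fun q => ‖θ q‖ ^ 2) (mem_univ p)
end

section
/- Suppose the sequence (t^N) produced by a primal-dual method satisfies A_N F(t^N) ≤ min_{t∈Q} { ½‖t − y⁰‖₂² + Σ_{k=0}^N α_k [Φ(y^k) + ⟨∇Φ(y^k), t − y^k⟩ + h(t)] } + ε·A_N/2, where F = Φ + h with Φ convex differentiable and h convex, Q convex, A_N = Σ_k α_k > 0, α_k ≥ 0. Then F(t^N) − F(t*) ≤ R²/A_N + ε/2, where t* ∈ argmin_{t∈Q} F and R² = ½‖t* − y⁰‖₂². -/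
open Real

/-!
Every linearisation `Φ (y k) + ⟪∇Φ (y k), t - y k⟫` of the convex function `Φ` lies below `Φ`,
so at `t = tstar` the weighted model in the hypothesis is at most `A * F tstar`, where
`F = Φ + h`. Dividing the resulting bound
`A * F tN ≤ ½ ‖tstar - y0‖² + A * F tstar + ε A / 2` by `A > 0` gives the claim.
-/

theorem ConvexOn.add_fderiv_sub_le {E : Type*} [NormedAddCommGroup E] [NormedSpace ℝ E]
    {S : Set E} {f : E → ℝ} {f' : E →L[ℝ] ℝ} {x y : E}
    (hf : ConvexOn ℝ S f) (hx : x ∈ S) (hy : y ∈ S) (hf' : HasFDerivAt f f' x) :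
    f x + f' (y - x) ≤ f y := by
  set L : ℝ →ᵃ[ℝ] E := AffineMap.lineMap x y
  have hline : ConvexOn ℝ (L ⁻¹' S) (f ∘ L) := hf.comp_affineMap L
  have hderiv : HasDerivAt (f ∘ L) (f' (y - x)) 0 := by
    refine HasFDerivAt.comp_hasDerivAt (0 : ℝ) ?_ AffineMap.hasDerivAt_lineMap
    simpa [L] using hf'
  have hslope := hline.le_slope_of_hasDerivAt (x := 0) (y := 1) (by simpa [L] using hx)
    (by simpa [L] using hy) one_pos hderiv
  simp only [slope_def_field, Function.comp_apply, L, AffineMap.lineMap_apply_zero,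
    AffineMap.lineMap_apply_one, sub_zero, div_one] at hslope
  linarith

theorem ConvexOn.add_inner_gradient_sub_le {F : Type*} [NormedAddCommGroup F]
    [InnerProductSpace ℝ F] [CompleteSpace F] {S : Set F} {f : F → ℝ} {g x y : F}
    (hf : ConvexOn ℝ S f) (hx : x ∈ S) (hy : y ∈ S) (hg : HasGradientAt f g x) :
    f x + inner ℝ g (y - x) ≤ f y :=
  hf.add_fderiv_sub_le hx hy hg.hasFDerivAt

theorem umst_primal_dual_convergence_general {n : ℕ}
    (Φ : EuclideanSpace ℝ (Fin n) → ℝ) (h : EuclideanSpace ℝ (Fin n) → ℝ)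
    (Q : Set (EuclideanSpace ℝ (Fin n)))
    (hΦ : ConvexOn ℝ Set.univ Φ)
    (gΦ : ℕ → EuclideanSpace ℝ (Fin n))
    (y0 : EuclideanSpace ℝ (Fin n))
    (y : ℕ → EuclideanSpace ℝ (Fin n))
    (hgrad : ∀ k, HasGradientAt Φ (gΦ k) (y k))
    (N : ℕ) (α : ℕ → ℝ) (hα : ∀ k, 0 ≤ α k)
    (A : ℝ) (hA : A = ∑ k ∈ Finset.range (N+1), α k) (hApos : 0 < A)
    (tN : EuclideanSpace ℝ (Fin n))
    (ε : ℝ)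
    (hkey : ∀ t ∈ Q,
      A * (Φ tN + h tN) ≤
        (1/2) * ‖t - y0‖^2 +
          (∑ k ∈ Finset.range (N+1),
            α k * (Φ (y k) + (inner ℝ (gΦ k) (t - y k) : ℝ) + h t)) + ε * A / 2)
    (tstar : EuclideanSpace ℝ (Fin n)) (htstar : tstar ∈ Q) :
    (Φ tN + h tN) - (Φ tstar + h tstar) ≤ ((1/2) * ‖tstar - y0‖^2) / A + ε / 2 := by
  have hmodel : ∑ k ∈ Finset.range (N+1),
      α k * (Φ (y k) + (inner ℝ (gΦ k) (tstar - y k) : ℝ) + h tstar) ≤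
      A * (Φ tstar + h tstar) := by
    rw [hA, Finset.sum_mul]
    gcongr with k
    · exact hα k
    · linarith [hΦ.add_inner_gradient_sub_le (Set.mem_univ _) (Set.mem_univ tstar) (hgrad k)]
  rw [← sub_le_iff_le_add, le_div_iff₀ hApos]
  linarith [hkey tstar htstar]

theorem umst_primal_dual_convergence {n : ℕ}
    (Φ : EuclideanSpace ℝ (Fin n) → ℝ) (h : EuclideanSpace ℝ (Fin n) → ℝ)
    (Q : Set (EuclideanSpace ℝ (Fin n)))
    (hQ : Convex ℝ Q)
    (hΦ : ConvexOn ℝ Set.univ Φ) (hh : ConvexOn ℝ Set.univ h)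
    (gΦ : ℕ → EuclideanSpace ℝ (Fin n))
    (y0 : EuclideanSpace ℝ (Fin n)) (hy0 : y0 ∈ Q)
    (y : ℕ → EuclideanSpace ℝ (Fin n)) (hy : ∀ k, y k ∈ Q)
    (hgrad : ∀ k, HasGradientAt Φ (gΦ k) (y k))
    (N : ℕ) (α : ℕ → ℝ) (hα : ∀ k, 0 ≤ α k)
    (A : ℝ) (hA : A = ∑ k ∈ Finset.range (N+1), α k) (hApos : 0 < A)
    (tN : EuclideanSpace ℝ (Fin n)) (htN : tN ∈ Q)
    (ε : ℝ) (hε : 0 ≤ ε)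
    (hkey : ∀ t ∈ Q,
      A * (Φ tN + h tN) ≤
        (1/2) * ‖t - y0‖^2 +
          (∑ k ∈ Finset.range (N+1),
            α k * (Φ (y k) + (inner ℝ (gΦ k) (t - y k) : ℝ) + h t)) + ε * A / 2)
    (tstar : EuclideanSpace ℝ (Fin n)) (htstar : tstar ∈ Q)
    (hmin : ∀ t ∈ Q, Φ tstar + h tstar ≤ Φ t + h t) :
    (Φ tN + h tN) - (Φ tstar + h tstar) ≤ ((1/2) * ‖tstar - y0‖^2) / A + ε / 2 :=
  umst_primal_dual_convergence_general Φ h Q hΦ gΦ y0 y hgrad N α hα A hA hApos tN ε hkey tstar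
    htstar
end
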